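/- Let d and n be positive integers and let s be the unique nonnegative integer with Σ_{i=0}^{s−1} C(n−1+i, n−1) < d ≤ Σ_{i=0}^{s} C(n−1+i, n−1). Then the Borel-fixed ideal I generated by the C(n+d,d) − d largest monomials of degree d in K[x_0,…,x_n] with respect to RevLex has saturation of regularity exactly s + 1, and moreover every Borel-fixed ideal J with constant Hilbert polynomial d satisfies reg(sat(J)) ≥ s + 1. -/

import Mathlib

open Finset

/-- Elementary decreasing move `e⁻_i` : replace one factor `x_i` by `x_{i-1}`. -/
def downAt (i : ℕ) (α : ℕ → ℕ) : ℕ → ℕ :=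
  fun k => if k = i then α i - 1 else if k = i - 1 then α (i - 1) + 1 else α k

/-- Elementary increasing move `e⁺_i` : replace one factor `x_i` by `x_{i+1}`. -/
def upAt (i : ℕ) (α : ℕ → ℕ) : ℕ → ℕ :=
  fun k => if k = i then α i - 1 else if k = i + 1 then α (i + 1) + 1 else α k

/-- `β` is obtained from `α` by one admissible decreasing move. -/
def DownStep (n : ℕ) (α β : ℕ → ℕ) : Prop :=
  ∃ i, 1 ≤ i ∧ i ≤ n ∧ 0 < α i ∧ β = downAt i α

/-- `β` is obtained from `α` by one admissible increasing move. -/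
def UpStep (n : ℕ) (α β : ℕ → ℕ) : Prop :=
  ∃ i, i < n ∧ 0 < α i ∧ β = upAt i α

/-- Borel partial order: `geB n α β` means `x^α ≥_B x^β`, i.e. `β` is reachable
from `α` by a finite sequence of decreasing moves. -/
def geB (n : ℕ) (α β : ℕ → ℕ) : Prop :=
  Relation.ReflTransGen (DownStep n) α β

/-- `Mon n r` : (exponents of) monomials of degree `r` in `x_0,…,x_n`, i.e. `𝒫(n,r)`. -/
def Mon (n r : ℕ) : Set (ℕ → ℕ) :=
  {α | (∀ k, n < k → α k = 0) ∧ ∑ i ∈ Finset.range (n + 1), α i = r}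

/-- A Borel set in `𝒫(n,r)`: closed under admissible increasing moves. -/
def IsBorelSet (n r : ℕ) (B : Set (ℕ → ℕ)) : Prop :=
  B ⊆ Mon n r ∧ ∀ α ∈ B, ∀ β, UpStep n α β → β ∈ B

/-- `σ(j) = ∑_{i=j}^n α_i`. -/
def sumFrom (n j : ℕ) (α : ℕ → ℕ) : ℕ := ∑ i ∈ Finset.Icc j n, α i

/-- Multiplication by the variable `x_i`. -/
def addVar (i : ℕ) (α : ℕ → ℕ) : ℕ → ℕ := fun k => if k = i then α k + 1 else α k

/-- Division by the variable `x_i`. -/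
def subVar (i : ℕ) (α : ℕ → ℕ) : ℕ → ℕ := fun k => if k = i then α k - 1 else α k

/-- The result of applying the composition of decreasing moves `(e⁻_l)^{μ l}` (over all `l`). -/
def applyMoves (μ α : ℕ → ℕ) : ℕ → ℕ := fun k => α k + μ (k + 1) - μ k

/-- The composition of decreasing moves encoded by `μ` is admissible on `α`. -/
def AdmissibleOn (μ α : ℕ → ℕ) : Prop := ∀ k, μ k ≤ α k + μ (k + 1)

/-- `𝔉_α` : admissible compositions of decreasing moves with indices in `[1,j]`
sending `α` inside `B` (contains the identity `μ = 0` as soon as `α ∈ B`). -/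
def MovesFam (j : ℕ) (α : ℕ → ℕ) (B : Set (ℕ → ℕ)) : Set (ℕ → ℕ) :=
  {μ | (∀ l, μ l ≠ 0 → 1 ≤ l ∧ l ≤ j) ∧ AdmissibleOn μ α ∧ applyMoves μ α ∈ B}

/-- `min x^γ` : least index of a variable dividing `x^γ`. -/
noncomputable def minIdx (γ : ℕ → ℕ) : ℕ := sInf {k | γ k ≠ 0}

/-- `x^α >_DegLex x^β` for monomials of the same degree (`x_n ≻ ⋯ ≻ x_0`). -/
def degLexGT (α β : ℕ → ℕ) : Prop :=
  ∃ j, β j < α j ∧ ∀ k, j < k → α k = β k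

/-- `x^α >_RevLex x^β` for monomials of the same degree (`x_n ≻ ⋯ ≻ x_0`). -/
def revLexGT (α β : ℕ → ℕ) : Prop :=
  ∃ j, α j < β j ∧ ∀ k, k < j → α k = β k

/-- The monomial `x_1^k x_0^{d-k}`. -/
def pure01 (d k : ℕ) : ℕ → ℕ :=
  fun m => if m = 1 then k else if m = 0 then d - k else 0

/-- For a Borel set `B` of degree-`d` monomials (points case), the regularity of the
saturation of `⟨B⟩` is the least `s` with `x_1^s x_0^{d-s} ∈ B`. -/
noncomputable def regSat (d : ℕ) (B : Set (ℕ → ℕ)) : ℕ := sInf {s | pure01 d s ∈ B}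

/-- Degree-`d` part of the lexsegment ideal `L = (x_n,…,x_2,x_1^d)`. -/
def lexSegPts (n d : ℕ) : Set (ℕ → ℕ) :=
  {α ∈ Mon n d | (∃ i, 2 ≤ i ∧ i ≤ n ∧ 0 < α i) ∨ d ≤ α 1}

/-- A monomial ideal in `K[x_0,…,x_n]`, given by its set of (exponents of) monomials. -/
def IsMonomialIdeal (n : ℕ) (S : Set (ℕ → ℕ)) : Prop :=
  (∀ α ∈ S, ∀ k, n < k → α k = 0) ∧ ∀ α ∈ S, ∀ k, k ≤ n → addVar k α ∈ S

/-- Strongly stable (Borel-fixed in characteristic 0): `x^α ∈ I`, `x_i ∣ x^α`, `i < j ≤ n`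
implies `x_j x^α / x_i ∈ I`. -/
def StronglyStable (n : ℕ) (S : Set (ℕ → ℕ)) : Prop :=
  ∀ α ∈ S, ∀ i j, i < j → j ≤ n → 0 < α i →
    (fun k => if k = i then α i - 1 else if k = j then α j + 1 else α k) ∈ S

/-- `x^α` is a minimal generator of the monomial ideal `S`. -/
def MinGen (n : ℕ) (S : Set (ℕ → ℕ)) (α : ℕ → ℕ) : Prop :=
  α ∈ S ∧ ∀ k, k ≤ n → 0 < α k → subVar k α ∉ S

/-!
Write `σ_j α = ∑_{i ≥ j} α_i`. A Borel set contains every monomial whose tail sums `σ_j`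
dominate those of one of its elements: some single move `x_i → x_{i+1}` brings the element
closer. So if `x_1^t x_0^{d-t}` lies in a Borel set `J` of degree-`d` monomials, so does every
monomial with `x_0`-exponent at most `d - t`, and the `d` monomials outside `J` are multiples of
`x_0^{d-t+1}`; there are `C(n-1+t, n) = ∑_{i<t} C(n-1+i, n-1)` of those, which forces `t > s`.
For the RevLex segment `S`, the multiples of `x_0^{d-s}` are RevLex-smaller than
`x_1^{s+1} x_0^{d-s-1}`; were the latter outside `S`, all `C(n+s, n) + 1 > d` of these monomials
would be outside `S` as well.
-/

theorem mon_eq_image_finsuppAntidiag (n r : ℕ) :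
    Mon n r = (⇑) '' ((range (n + 1)).finsuppAntidiag r : Set (ℕ →₀ ℕ)) := by
  ext α
  constructor
  · rintro ⟨hsupp, hsum⟩
    have hfin : (Function.support α).Finite :=
      (range (n + 1)).finite_toSet.subset fun k hk => by
        by_contra h
        exact hk (hsupp k (by simpa using h))
    refine ⟨Finsupp.ofSupportFinite α hfin, ?_, rfl⟩
    simp only [mem_coe, mem_finsuppAntidiag]
    refine ⟨hsum, fun k hk => ?_⟩
    by_contra h
    exact (Finsupp.mem_support_iff.1 hk) (hsupp k (by simpa using h))
  · rintro ⟨f, hf, rfl⟩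
    simp only [mem_coe, mem_finsuppAntidiag] at hf
    refine ⟨fun k hk => ?_, hf.1⟩
    by_contra h
    have := hf.2 (Finsupp.mem_support_iff.2 h)
    simp only [mem_range, Order.lt_add_one_iff] at this
    omega

theorem mon_finite (n r : ℕ) : (Mon n r).Finite := by
  rw [mon_eq_image_finsuppAntidiag]
  exact (Finset.finite_toSet _).image _

theorem ncard_mon (n r : ℕ) : (Mon n r).ncard = (n + r).choose r := by
  rw [mon_eq_image_finsuppAntidiag, Set.ncard_image_of_injective _ DFunLike.coe_injective,
    Set.ncard_coe_finset, card_finsuppAntidiag_nat_eq_choose, card_range, Nat.add_right_comm,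
    Nat.add_sub_cancel]

theorem ncard_mon_sep_sub_le_apply_zero (n : ℕ) {d k : ℕ} (hk : k ≤ d) :
    {β ∈ Mon n d | d - k ≤ β 0}.ncard = (n + k).choose n := by
  have himage : (· + Pi.single 0 (d - k)) '' Mon n k = {β ∈ Mon n d | d - k ≤ β 0} := by
    ext β
    constructor
    · rintro ⟨γ, ⟨hsupp, hsum⟩, rfl⟩
      refine ⟨⟨fun j hj => ?_, ?_⟩, by simp⟩
      · simp [hsupp j hj, show j ≠ 0 by omega]
      · simp [sum_add_distrib, hsum, hk]
    · rintro ⟨⟨hsupp, hsum⟩, h0⟩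
      have hβ : β - Pi.single 0 (d - k) + Pi.single 0 (d - k) = β := by
        ext j
        rcases eq_or_ne j 0 with rfl | hj <;> simp [*]
      refine ⟨β - Pi.single 0 (d - k), ⟨fun j hj => ?_, ?_⟩, hβ⟩
      · simp [hsupp j hj]
      · rw [← hβ] at hsum
        simp only [Pi.add_apply, Pi.sub_apply, sum_add_distrib, sum_pi_single', mem_range,
          Nat.zero_lt_succ, if_true] at hsum
        simp only [Pi.sub_apply]
        omega
  rw [← himage, Set.ncard_image_of_injective _ (add_left_injective _), ncard_mon,
    Nat.choose_symm_add]

section sumFrom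

variable {n d : ℕ}

theorem sumFrom_zero (α : ℕ → ℕ) : sumFrom n 0 α = ∑ i ∈ range (n + 1), α i := by
  rw [sumFrom, Nat.range_succ_eq_Icc_zero]

theorem sumFrom_zero_of_mem_mon {α : ℕ → ℕ} (hα : α ∈ Mon n d) : sumFrom n 0 α = d := by
  rw [sumFrom_zero, hα.2]

theorem sumFrom_eq_add_sumFrom_succ (α : ℕ → ℕ) {j : ℕ} (hj : j ≤ n) :
    sumFrom n j α = α j + sumFrom n (j + 1) α := by
  rw [sumFrom, sumFrom, Icc_add_one_left_eq_Ioc, add_sum_Ioc_eq_sum_Icc hj]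

theorem sumFrom_of_lt (α : ℕ → ℕ) {j : ℕ} (hj : n < j) : sumFrom n j α = 0 := by
  rw [sumFrom, Icc_eq_empty_of_lt hj, sum_empty]

theorem sumFrom_upAt {i : ℕ} {α : ℕ → ℕ} (hi : i < n) (hα : 0 < α i) (j : ℕ) :
    sumFrom n j (upAt i α) = sumFrom n j α + if j = i + 1 then 1 else 0 := by
  have hpoint : ∀ k ∈ Icc j n, upAt i α k + (if i = k then 1 else 0) =
      α k + if i + 1 = k then 1 else 0 := by
    intro k _
    unfold upAt
    split_ifs <;> subst_vars <;> omega
  have hsum := sum_congr rfl hpoint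
  simp only [sum_add_distrib, sum_ite_eq, mem_Icc] at hsum
  unfold sumFrom
  split_ifs at hsum ⊢ <;> omega

theorem upAt_mem_mon {i : ℕ} {α : ℕ → ℕ} (hα : α ∈ Mon n d) (hi : i < n) (hpos : 0 < α i) :
    upAt i α ∈ Mon n d := by
  refine ⟨fun k hk => ?_, ?_⟩
  · simp only [upAt, if_neg (show k ≠ i by omega), if_neg (show k ≠ i + 1 by omega), hα.1 k hk]
  · rw [← sumFrom_zero, sumFrom_upAt hi hpos, sumFrom_zero_of_mem_mon hα, if_neg (by omega),
      add_zero]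

theorem eq_of_sumFrom_eq {α β : ℕ → ℕ} (hα : α ∈ Mon n d) (hβ : β ∈ Mon n d)
    (h : ∀ j, sumFrom n j α = sumFrom n j β) : α = β := by
  funext k
  rcases le_or_gt k n with hk | hk
  · have hα' := sumFrom_eq_add_sumFrom_succ α hk
    have hβ' := sumFrom_eq_add_sumFrom_succ β hk
    have := h k
    have := h (k + 1)
    omega
  · rw [hα.1 k hk, hβ.1 k hk]

end sumFrom

section pure01

variable {n d : ℕ}

theorem pure01_injective (d : ℕ) : Function.Injective (pure01 d) := fun a b h => by
  simpa [pure01] using congrFun h 1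

theorem sumFrom_pure01_of_two_le (t : ℕ) {j : ℕ} (hj : 2 ≤ j) :
    sumFrom n j (pure01 d t) = 0 :=
  sum_eq_zero fun k hk => by
    simp [pure01, show k ≠ 1 by simp at hk; omega, show k ≠ 0 by simp at hk; omega]

theorem sumFrom_one_pure01 (hn : 1 ≤ n) (t : ℕ) : sumFrom n 1 (pure01 d t) = t := by
  rw [sumFrom_eq_add_sumFrom_succ _ hn, sumFrom_pure01_of_two_le t le_rfl]
  simp [pure01]

theorem pure01_mem_mon (hn : 1 ≤ n) {t : ℕ} (ht : t ≤ d) : pure01 d t ∈ Mon n d := by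
  refine ⟨fun k hk => by simp [pure01, show k ≠ 1 by omega, show k ≠ 0 by omega], ?_⟩
  rw [← sumFrom_zero, sumFrom_eq_add_sumFrom_succ _ (Nat.zero_le n), zero_add,
    sumFrom_one_pure01 hn]
  simp [pure01, ht]

end pure01

namespace IsBorelSet

variable {n d : ℕ} {J : Set (ℕ → ℕ)}

theorem mem_of_sumFrom_le (hJ : IsBorelSet n d J) {α β : ℕ → ℕ} (hα : α ∈ J)
    (hβ : β ∈ Mon n d) (hle : ∀ j, sumFrom n j α ≤ sumFrom n j β) : β ∈ J := by
  induction hN : ∑ j ∈ range (n + 1), (sumFrom n j β - sumFrom n j α)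
    using Nat.strong_induction_on generalizing α with
  | _ N ih =>
  have hαm := hJ.1 hα
  by_cases hαβ : α = β
  · exact hαβ ▸ hα
  have hex : ∃ j, sumFrom n j α < sumFrom n j β := by
    by_contra! hge
    exact hαβ (eq_of_sumFrom_eq hαm hβ fun j => (hle j).antisymm (hge j))
  classical
  have hj0 : Nat.find hex ≠ 0 := fun h0 => by
    have := Nat.find_spec hex
    rw [h0, sumFrom_zero_of_mem_mon hαm, sumFrom_zero_of_mem_mon hβ] at this
    exact lt_irrefl d this
  obtain ⟨i, hi⟩ := Nat.exists_eq_succ_of_ne_zero hj0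
  have hlt : sumFrom n (i + 1) α < sumFrom n (i + 1) β := by
    simpa only [hi] using Nat.find_spec hex
  have hin : i < n := by
    by_contra! h
    rw [sumFrom_of_lt α (by omega), sumFrom_of_lt β (by omega)] at hlt
    exact lt_irrefl 0 hlt
  have heq : sumFrom n i α = sumFrom n i β :=
    (hle i).antisymm (not_lt.1 (Nat.find_min hex (by omega)))
  -- `σ_i` agree by minimality while `σ_{i+1} α < σ_{i+1} β`, so `α i > β i`
  have hpos : 0 < α i := by
    have := sumFrom_eq_add_sumFrom_succ α hin.le
    have := sumFrom_eq_add_sumFrom_succ β hin.le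
    omega
  have hup := sumFrom_upAt hin hpos
  refine ih _ ?_ (hJ.2 α hα _ ⟨i, hin, hpos, rfl⟩) (fun j => ?_) rfl
  · rw [← hN]
    refine sum_lt_sum (fun j _ => ?_) ⟨i + 1, mem_range.2 (by omega), ?_⟩
    · rw [hup]; split_ifs <;> omega
    · rw [hup, if_pos rfl]; omega
  · have := hle j
    rw [hup]; split_ifs with h
    · subst h; omega
    · omega

theorem mem_of_pure01_mem (hn : 1 ≤ n) (hJ : IsBorelSet n d J) {t : ℕ} (ht : pure01 d t ∈ J)
    {β : ℕ → ℕ} (hβ : β ∈ Mon n d) (hβ0 : β 0 + t ≤ d) : β ∈ J := by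
  refine hJ.mem_of_sumFrom_le ht hβ fun j => ?_
  match j with
  | 0 => rw [sumFrom_zero_of_mem_mon (hJ.1 ht), sumFrom_zero_of_mem_mon hβ]
  | 1 =>
    have hsplit := sumFrom_eq_add_sumFrom_succ β (Nat.zero_le n)
    rw [zero_add, sumFrom_zero_of_mem_mon hβ] at hsplit
    rw [sumFrom_one_pure01 hn]
    omega
  | j + 2 => simp [sumFrom_pure01_of_two_le]

theorem le_choose_of_pure01_mem (hn : 1 ≤ n) (hJ : IsBorelSet n d J)
    (hJc : (Mon n d \ J).ncard = d) {t : ℕ} (ht : pure01 d t ∈ J) :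
    d ≤ (n - 1 + t).choose n := by
  have hcompl : Mon n d \ J ⊆ {β ∈ Mon n d | d < β 0 + t} := fun β ⟨hβ, hβJ⟩ =>
    ⟨hβ, by by_contra! h; exact hβJ (hJ.mem_of_pure01_mem hn ht hβ h)⟩
  have hbound := Set.ncard_le_ncard hcompl ((mon_finite n d).subset fun _ h => h.1)
  rcases t with _ | k
  · have hempty : {β ∈ Mon n d | d < β 0 + 0} = ∅ :=
      Set.eq_empty_of_forall_notMem fun β ⟨hβ, hlt⟩ => by
        have := sumFrom_eq_add_sumFrom_succ β (Nat.zero_le n)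
        rw [sumFrom_zero_of_mem_mon hβ] at this
        omega
    rw [hempty, Set.ncard_empty] at hbound
    omega
  · have htd : k + 1 ≤ d := by
      have := sumFrom_eq_add_sumFrom_succ (pure01 d (k + 1)) (Nat.zero_le n)
      rw [sumFrom_one_pure01 hn, sumFrom_zero_of_mem_mon (hJ.1 ht)] at this
      omega
    have hset : {β ∈ Mon n d | d < β 0 + (k + 1)} = {β ∈ Mon n d | d - k ≤ β 0} :=
      Set.ext fun β => and_congr_right fun _ => by omega
    rw [show n - 1 + (k + 1) = n + k by omega]
    rwa [hset, ncard_mon_sep_sub_le_apply_zero n (by omega), hJc] at hbound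

theorem pure01_self_mem (hn : 1 ≤ n) (hJ : IsBorelSet n d J) (hJc : (Mon n d \ J).ncard = d) :
    pure01 d d ∈ J := by
  by_contra hd
  have hsub : pure01 d '' Set.Iic d ⊆ Mon n d \ J := by
    rintro _ ⟨t, ht, rfl⟩
    refine ⟨pure01_mem_mon hn ht, fun htJ => hd ?_⟩
    exact hJ.mem_of_pure01_mem hn htJ (pure01_mem_mon hn le_rfl) (by simpa [pure01] using ht)
  have := Set.ncard_le_ncard hsub ((mon_finite n d).subset Set.sdiff_subset)
  rw [Set.ncard_image_of_injective _ (pure01_injective d), hJc, ← coe_Iic, Set.ncard_coe_finset,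
    Nat.card_Iic] at this
  omega

end IsBorelSet

theorem revLexGT_asymm {α β : ℕ → ℕ} (h : revLexGT α β) : ¬ revLexGT β α := by
  rintro ⟨j', hj', hk'⟩
  obtain ⟨j, hj, hk⟩ := h
  rcases lt_trichotomy j j' with h | rfl | h
  · exact (hk' j h ▸ hj).false
  · omega
  · exact (hk j' h ▸ hj').false

theorem revLexGT_upAt {i : ℕ} {α : ℕ → ℕ} (h : 0 < α i) : revLexGT (upAt i α) α :=
  ⟨i, by simp [upAt]; omega, fun k hk => by simp [upAt, hk.ne, show k ≠ i + 1 by omega]⟩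

section revLexSegment

variable {n d : ℕ} {S : Set (ℕ → ℕ)}

theorem mem_of_revLexGT_of_mem (hseg : ∀ α ∈ S, ∀ β ∈ Mon n d \ S, revLexGT α β)
    {α β : ℕ → ℕ} (hα : α ∈ Mon n d) (hβ : β ∈ S) (h : revLexGT α β) : α ∈ S := by
  by_contra hαS
  exact revLexGT_asymm h (hseg β hβ α ⟨hα, hαS⟩)

theorem isBorelSet_of_revLexSegment (hseg : ∀ α ∈ S, ∀ β ∈ Mon n d \ S, revLexGT α β)
    (hS : S ⊆ Mon n d) : IsBorelSet n d S := by
  refine ⟨hS, ?_⟩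
  rintro α hα _ ⟨i, hi, hpos, rfl⟩
  exact mem_of_revLexGT_of_mem hseg (upAt_mem_mon (hS hα) hi hpos) hα (revLexGT_upAt hpos)

theorem pure01_mem_of_revLexSegment (hseg : ∀ α ∈ S, ∀ β ∈ Mon n d \ S, revLexGT α β)
    (hn : 1 ≤ n) (hSc : (Mon n d \ S).ncard = d) {k : ℕ} (hk : k < d)
    (hd : d ≤ (n + k).choose n) : pure01 d (k + 1) ∈ S := by
  by_contra hnot
  have hmem : pure01 d (k + 1) ∈ Mon n d := pure01_mem_mon hn hk
  have hsub : insert (pure01 d (k + 1)) {β ∈ Mon n d | d - k ≤ β 0} ⊆ Mon n d \ S := by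
    refine Set.insert_subset ⟨hmem, hnot⟩ fun β ⟨hβ, hβ0⟩ => ⟨hβ, fun hβS => hnot ?_⟩
    exact mem_of_revLexGT_of_mem hseg hmem hβS ⟨0, by simp [pure01]; omega, by simp⟩
  have hnotin : pure01 d (k + 1) ∉ {β ∈ Mon n d | d - k ≤ β 0} := fun h => by
    simp only [tsub_le_iff_right, Set.mem_ofPred_eq, pure01, zero_ne_one, ↓reduceIte] at h
    omega
  have := Set.ncard_le_ncard hsub ((mon_finite n d).subset Set.sdiff_subset)
  rw [Set.ncard_insert_of_notMem hnotin ((mon_finite n d).subset fun _ h => h.1),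
    ncard_mon_sep_sub_le_apply_zero n hk.le, hSc] at this
  omega

end revLexSegment

theorem sum_range_add_left_choose (m t : ℕ) :
    ∑ i ∈ range t, (m + i).choose m = (m + t).choose (m + 1) := by
  induction t with
  | zero => simp
  | succ t ih => rw [sum_range_succ, ih, ← add_assoc, Nat.choose_succ_succ', add_comm]

theorem le_regSat {d m t₀ : ℕ} {B : Set (ℕ → ℕ)} (h₀ : pure01 d t₀ ∈ B)
    (h : ∀ t, pure01 d t ∈ B → m ≤ t) : m ≤ regSat d B :=
  le_csInf ⟨t₀, h₀⟩ h

theorem stmt_16_general (n d s : ℕ) (hn : 1 ≤ n)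
    (hs1 : ∑ i ∈ Finset.range s, (n - 1 + i).choose (n - 1) < d)
    (hs2 : d ≤ ∑ i ∈ Finset.range (s + 1), (n - 1 + i).choose (n - 1))
    (S : Set (ℕ → ℕ)) (hS : S ⊆ Mon n d)
    (hcard : S.ncard = (n + d).choose d - d)
    (hseg : ∀ α ∈ S, ∀ β ∈ Mon n d \ S, revLexGT α β) :
    regSat d S = s + 1 ∧
    ∀ J : Set (ℕ → ℕ), IsBorelSet n d J → (Mon n d \ J).ncard = d →
      s + 1 ≤ regSat d J := by
  have hsd : s < d := by
    have := card_nsmul_le_sum (range s) _ 1 fun i _ =>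
      Nat.choose_pos (Nat.le_add_right (n - 1) i)
    simp only [card_range, smul_eq_mul, mul_one] at this
    omega
  rw [sum_range_add_left_choose, Nat.sub_add_cancel hn] at hs1 hs2
  have hSc : (Mon n d \ S).ncard = d := by
    have : d + 1 ≤ (n + d).choose d :=
      Nat.choose_succ_self_right d ▸ Nat.choose_le_choose d (by omega)
    rw [Set.ncard_sdiff hS ((mon_finite n d).subset hS), ncard_mon, hcard]
    omega
  have hreg : ∀ J, IsBorelSet n d J → (Mon n d \ J).ncard = d → s + 1 ≤ regSat d J :=
    fun J hJ hJc => le_regSat (hJ.pure01_self_mem hn hJc) fun t ht => by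
      have := hJ.le_choose_of_pure01_mem hn hJc ht
      by_contra! hts
      have := Nat.choose_le_choose n (show n - 1 + t ≤ n - 1 + s by omega)
      omega
  rw [show n - 1 + (s + 1) = n + s by omega] at hs2
  have hmem : pure01 d (s + 1) ∈ S := pure01_mem_of_revLexSegment hseg hn hSc hsd hs2
  exact ⟨le_antisymm (Nat.sInf_le hmem) (hreg S (isBorelSet_of_revLexSegment hseg hS) hSc), hreg⟩

/-- the RevLex segment ideal of d points has saturation of regularity
exactly s + 1, and this is the minimum over all Borel ideals of d points. -/
theorem stmt_16 (n d s : ℕ) (hn : 1 ≤ n) (hd : 1 ≤ d)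
    (hs1 : ∑ i ∈ Finset.range s, (n - 1 + i).choose (n - 1) < d)
    (hs2 : d ≤ ∑ i ∈ Finset.range (s + 1), (n - 1 + i).choose (n - 1))
    (S : Set (ℕ → ℕ)) (hS : S ⊆ Mon n d)
    (hcard : S.ncard = (n + d).choose d - d)
    (hseg : ∀ α ∈ S, ∀ β ∈ Mon n d \ S, revLexGT α β) :
    regSat d S = s + 1 ∧
    ∀ J : Set (ℕ → ℕ), IsBorelSet n d J → (Mon n d \ J).ncard = d →
      s + 1 ≤ regSat d J :=
  stmt_16_general n d s hn hs1 hs2 S hS hcard hseg
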